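/- Fix an integer c ≥ 2 and let G be a finite double tree with no c-balanced double tree decomposition that has the minimum number of vertices among all such double trees. Let v be a vertex of G of degree 3, let G = T1 ⊔ T2 be a double tree decomposition, and suppose v is a leaf of T2 with vb ∈ E(T2) its unique incident edge in T2. Then b is big. -/

import Mathlib

/-- A multigraph without loops: edges `E` with an endpoint map into unordered
pairs of vertices, no edge being a loop. -/
structure Multigraph (V : Type*) (E : Type*) where
  ends : E → Sym2 V
  loopless : ∀ e, ¬ (ends e).IsDiag

namespace Multigraph

variable {V E : Type*}

/-- `a` and `b` are joined by an edge belonging to the edge set `S`. -/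
def Adj (G : Multigraph V E) (S : Set E) (a b : V) : Prop :=
  ∃ e ∈ S, G.ends e = s(a, b)

/-- Reachability in the spanning subgraph with edge set `S`. -/
def Reachable (G : Multigraph V E) (S : Set E) (a b : V) : Prop :=
  Relation.ReflTransGen (G.Adj S) a b

/-- The spanning subgraph with edge set `S` is connected. -/
def Connected (G : Multigraph V E) (S : Set E) : Prop :=
  ∀ a b : V, G.Reachable S a b

/-- The spanning subgraph with edge set `S` is acyclic: every edge of `S`
is a bridge of `S`. -/
def Acyclic (G : Multigraph V E) (S : Set E) : Prop :=
  ∀ e ∈ S, ∀ a b : V, G.ends e = s(a, b) → ¬ G.Reachable (S \ {e}) a b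

/-- `S` is the edge set of a spanning tree: connected and acyclic. -/
def IsSpanningTree (G : Multigraph V E) (S : Set E) : Prop :=
  G.Connected S ∧ G.Acyclic S

/-- The edges of `S` incident to `v`. -/
def incEdges (G : Multigraph V E) (S : Set E) (v : V) : Set E :=
  {e ∈ S | v ∈ G.ends e}

/-- The degree of `v` in the spanning subgraph with edge set `S`. -/
noncomputable def deg (G : Multigraph V E) (S : Set E) (v : V) : ℕ :=
  (G.incEdges S v).ncard

/-- `T1, T2` form a double tree decomposition of `G`: they partition the
edges of `G` and are both spanning trees. -/
def IsDTD (G : Multigraph V E) (T1 T2 : Set E) : Prop :=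
  T1 ∪ T2 = Set.univ ∧ Disjoint T1 T2 ∧ G.IsSpanningTree T1 ∧ G.IsSpanningTree T2

/-- `G` is a double tree: the edge-disjoint union of two spanning trees. -/
def IsDoubleTree (G : Multigraph V E) : Prop :=
  ∃ T1 T2, G.IsDTD T1 T2

/-- A decomposition into two spanning subgraphs is `c`-balanced if at each
vertex the two degrees differ by at most `c`. -/
def Balanced (G : Multigraph V E) (c : ℕ) (S1 S2 : Set E) : Prop :=
  ∀ v : V, |(G.deg S1 v : ℤ) - (G.deg S2 v : ℤ)| ≤ (c : ℤ)

end Multigraph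

namespace Multigraph

variable {V E : Type*}

/-- `G` admits no `c`-balanced double tree decomposition. -/
def NoBalancedDTD (c : ℕ) (G : Multigraph V E) : Prop :=
  ¬ ∃ T1 T2 : Set E, G.IsDTD T1 T2 ∧ G.Balanced c T1 T2

/-- `v` is big: its degree exceeds `c + 2`. -/
def Big (G : Multigraph V E) (c : ℕ) (v : V) : Prop :=
  c + 2 < G.deg Set.univ v

/-- `v` is small: its degree is at most `c + 2`. -/
def Small (G : Multigraph V E) (c : ℕ) (v : V) : Prop :=
  G.deg Set.univ v ≤ c + 2

/-- `u` and `z` are joined by a double edge. -/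
def DoubleEdge (G : Multigraph V E) (u z : V) : Prop :=
  ∃ e1 e2 : E, e1 ≠ e2 ∧ G.ends e1 = s(u, z) ∧ G.ends e2 = s(u, z)

/-- `u` is a bad 3-vertex: it has degree 3, a small neighbour, and is joined
to a big vertex by a double edge. -/
def Bad3 (G : Multigraph V E) (c : ℕ) (u : V) : Prop :=
  G.deg Set.univ u = 3 ∧
  (∃ w, G.Adj Set.univ u w ∧ G.Small c w) ∧
  (∃ z, G.DoubleEdge u z ∧ G.Big c z)

/-- `u` is a poor 3-vertex: it has degree 3 and three distinct neighbours,
two big and one small. -/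
def Poor3 (G : Multigraph V E) (c : ℕ) (u : V) : Prop :=
  G.deg Set.univ u = 3 ∧
  ∃ x y s : V, x ≠ y ∧ x ≠ s ∧ y ≠ s ∧
    G.Adj Set.univ u x ∧ G.Adj Set.univ u y ∧ G.Adj Set.univ u s ∧
    G.Big c x ∧ G.Big c y ∧ G.Small c s

end Multigraph

/-!
If `b` were small, split off `v`: delete `v` with its edges `vb ∈ T2` and `vx, vy ∈ T1` and add a
new edge `xy`. The result is a double tree (`T1 - vx - vy + xy`, `T2 - vb`) with one vertex
fewer, so by minimality it has a `c`-balanced decomposition `S1 ⊔ S2`, say with `xy ∈ S1`.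
Replacing `xy` by `vx, vy` in `S1` and adding `vb` to `S2` yields a double tree decomposition of
`G` with unchanged degrees away from `v` and `b`. Both of these are small, and a small vertex is
balanced in every double tree decomposition: its two degrees are positive and sum to at most
`c + 2`.
-/

namespace Multigraph

variable {V E W F : Type*}

section Basic

variable {G : Multigraph V E} {S T : Set E} {a b c u w : V} {f : E}

theorem exists_ends_eq (G : Multigraph V E) (f : E) : ∃ a b, G.ends f = s(a, b) :=
  Sym2.ind (fun a b => ⟨a, b, rfl⟩) (G.ends f)

theorem ne_of_ends_eq (h : G.ends f = s(a, b)) : a ≠ b :=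
  fun hab => G.loopless f (h ▸ Sym2.mk_isDiag_iff.mpr hab)

theorem reachable_of_ends (hf : f ∈ S) (h : G.ends f = s(a, b)) : G.Reachable S a b :=
  .single ⟨f, hf, h⟩

theorem Reachable.trans (h₁ : G.Reachable S a b) (h₂ : G.Reachable S b c) :
    G.Reachable S a c :=
  Relation.ReflTransGen.trans h₁ h₂

theorem Reachable.symm (h : G.Reachable S a b) : G.Reachable S b a :=
  have : Std.Symm (G.Adj S) := ⟨fun _ _ ⟨f, hf, h⟩ => ⟨f, hf, h.trans Sym2.eq_swap⟩⟩
  Relation.ReflTransGen.stdSymm.symm _ _ h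

theorem Reachable.of_sym2_eq {p q : V} (h : G.Reachable S p q) (hpq : s(p, q) = s(a, b)) :
    G.Reachable S a b := by
  rcases Sym2.eq_iff.mp hpq with ⟨rfl, rfl⟩ | ⟨rfl, rfl⟩
  exacts [h, h.symm]

theorem Reachable.map {H : Multigraph W F} {S' : Set F} (φ : V → W)
    (hφ : ∀ f ∈ S, ∀ a b, G.ends f = s(a, b) → H.Reachable S' (φ a) (φ b))
    (h : G.Reachable S a b) : H.Reachable S' (φ a) (φ b) :=
  Relation.ReflTransGen.lift' φ (fun _ _ ⟨f, hf, hab⟩ => hφ f hf _ _ hab) _ _ h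

theorem Reachable.eq_of_isolated (hiso : ∀ f ∈ S, a ∉ G.ends f) (h : G.Reachable S a b) :
    a = b := by
  rcases h.cases_head with h | ⟨_, ⟨f, hf, hends⟩, _⟩
  · exact h
  · exact absurd (hends ▸ Sym2.mem_mk_left _ _) (hiso f hf)

theorem connected_of_forall_reachable (w : V) (h : ∀ u, G.Reachable S u w) : G.Connected S :=
  fun a b => (h a).trans (h b).symm

theorem Acyclic.injOn_ends (h : G.Acyclic S) : Set.InjOn G.ends S := by
  intro f₁ hf₁ f₂ hf₂ hends
  by_contra hne
  obtain ⟨a, b, hab⟩ := G.exists_ends_eq f₁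
  exact h f₁ hf₁ a b hab (reachable_of_ends ⟨hf₂, Ne.symm hne⟩ (hends ▸ hab))

theorem Acyclic.not_reachable_map {H : Multigraph W F} {S' : Set F} (hS' : H.Acyclic S')
    {f' : F} (hf' : f' ∈ S') (φ : V → W) (hends : H.ends f' = (G.ends f).map φ)
    (hab : G.ends f = s(a, b)) : ¬ H.Reachable (S' \ {f'}) (φ a) (φ b) :=
  hS' f' hf' _ _ (by rw [hends, hab, Sym2.map_mk])

theorem mem_incEdges : f ∈ G.incEdges S u ↔ f ∈ S ∧ u ∈ G.ends f := Iff.rfl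

theorem deg_insert_of_notMem (hu : u ∉ G.ends f) : G.deg (insert f S) u = G.deg S u := by
  have : G.incEdges (insert f S) u = G.incEdges S u := by
    ext g
    simp only [mem_incEdges, Set.mem_insert_iff]
    constructor
    · rintro ⟨rfl | hg, hug⟩ <;> tauto
    · rintro ⟨hg, hug⟩
      tauto
  rw [deg, this]
  rfl

variable [Finite E]

theorem deg_union (h : Disjoint S T) (u : V) : G.deg (S ∪ T) u = G.deg S u + G.deg T u := by
  have : G.incEdges (S ∪ T) u = G.incEdges S u ∪ G.incEdges T u := by
    ext f
    simp only [mem_incEdges, Set.mem_union]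
    tauto
  rw [deg, this, Set.ncard_union_eq (h.mono (fun _ hf => hf.1) (fun _ hf => hf.1))]
  rfl

theorem deg_insert_of_mem (hf : f ∉ S) (hu : u ∈ G.ends f) :
    G.deg (insert f S) u = G.deg S u + 1 := by
  have : G.incEdges (insert f S) u = insert f (G.incEdges S u) := by
    ext g
    simp only [mem_incEdges, Set.mem_insert_iff]
    constructor
    · rintro ⟨rfl | hg, hug⟩ <;> tauto
    · rintro (rfl | ⟨hg, hug⟩) <;> tauto
  rw [deg, this, Set.ncard_insert_of_notMem (fun h => hf h.1)]
  rfl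

theorem Connected.one_le_deg (h : G.Connected S) (hw : w ≠ u) : 1 ≤ G.deg S u := by
  rcases (h u w).cases_head with h | ⟨_, ⟨f, hf, hends⟩, _⟩
  · exact absurd h.symm hw
  · exact (Set.ncard_pos (Set.toFinite _)).mpr ⟨f, hf, hends ▸ Sym2.mem_mk_left _ _⟩

end Basic

section Decompositions

variable {G : Multigraph V E} {T₁ T₂ : Set E} {c : ℕ}

theorem IsDTD.symm (h : G.IsDTD T₁ T₂) : G.IsDTD T₂ T₁ :=
  ⟨Set.union_comm T₁ T₂ ▸ h.1, h.2.1.symm, h.2.2.2, h.2.2.1⟩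

theorem Balanced.symm (h : G.Balanced c T₁ T₂) : G.Balanced c T₂ T₁ :=
  fun u => abs_sub_comm (G.deg T₁ u : ℤ) _ ▸ h u

theorem exists_isDTD_balanced_mem_left (h : ¬ G.NoBalancedDTD c) (f : E) :
    ∃ T₁ T₂, G.IsDTD T₁ T₂ ∧ G.Balanced c T₁ T₂ ∧ f ∈ T₁ := by
  obtain ⟨T₁, T₂, hT, hbal⟩ := not_not.mp h
  rcases hT.1 ▸ Set.mem_univ f with hf | hf
  exacts [⟨T₁, T₂, hT, hbal, hf⟩, ⟨T₂, T₁, hT.symm, hbal.symm, hf⟩]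

variable [Finite E]

theorem IsDTD.abs_deg_sub_le_of_small (h : G.IsDTD T₁ T₂) {u w : V} (hu : G.Small c u)
    (hw : w ≠ u) : |(G.deg T₁ u : ℤ) - G.deg T₂ u| ≤ c := by
  have hsum := G.deg_union h.2.1 u
  rw [h.1] at hsum
  have h₁ := h.2.2.1.1.one_le_deg hw
  have h₂ := h.2.2.2.1.one_le_deg hw
  unfold Small at hu
  rw [abs_le]
  constructor <;> omega

theorem IsDTD.exists_of_leaf (h : G.IsDTD T₁ T₂) {v : V} {e : E} (hv : G.deg Set.univ v = 3)
    (hleaf : G.deg T₂ v = 1) (he : e ∈ T₂) (hve : v ∈ G.ends e) :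
    ∃ e₁ e₂ x y, e₁ ∈ T₁ ∧ e₂ ∈ T₁ ∧ e₁ ≠ e₂ ∧ x ≠ y ∧
      G.ends e₁ = s(v, x) ∧ G.ends e₂ = s(v, y) ∧
      ∀ f, v ∈ G.ends f → f = e ∨ f = e₁ ∨ f = e₂ := by
  obtain ⟨e', hT₂⟩ := Set.ncard_eq_one.mp hleaf
  have hT₁ : G.deg T₁ v = 2 := by
    have := G.deg_union h.2.1 v
    rw [h.1] at this
    omega
  obtain ⟨e₁, e₂, h₁₂, hT₁⟩ := Set.ncard_eq_two.mp hT₁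
  have he₁ : e₁ ∈ G.incEdges T₁ v := hT₁ ▸ Set.mem_insert _ _
  have he₂ : e₂ ∈ G.incEdges T₁ v := hT₁ ▸ Set.mem_insert_of_mem _ rfl
  obtain ⟨x, hx⟩ := Sym2.mem_iff_exists.mp he₁.2
  obtain ⟨y, hy⟩ := Sym2.mem_iff_exists.mp he₂.2
  refine ⟨e₁, e₂, x, y, he₁.1, he₂.1, h₁₂, ?_, hx, hy, fun f hf => ?_⟩
  · rintro rfl
    exact h₁₂ (h.2.2.1.2.injOn_ends he₁.1 he₂.1 (hx.trans hy.symm))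
  · rcases h.1 ▸ Set.mem_univ f with hf₁ | hf₂
    · have : f ∈ G.incEdges T₁ v := ⟨hf₁, hf⟩
      rw [hT₁] at this
      exact Or.inr this
    · have hf : f ∈ G.incEdges T₂ v := ⟨hf₂, hf⟩
      have he : e ∈ G.incEdges T₂ v := ⟨he, hve⟩
      rw [hT₂] at hf he
      exact Or.inl (hf.trans he.symm)

end Decompositions

/-- `G'` arises from `G` by deleting the vertex `v` together with its three edges
`e = vb`, `e₁ = vx`, `e₂ = vy` and adding a new edge `xy`. The maps `π` and `σ` identify the
vertices other than `v` with those of `G'`, and `ι` identifies the edges of `G'` with the edges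
of `G` other than `e` and `e₁`, the new edge `xy` standing for `e₂`. -/
structure SplitOff (G : Multigraph V E) (G' : Multigraph W F) (v b x y : V) (e e₁ e₂ : E) where
  π : V → W
  σ : W → V
  ι : F → E
  xy : F
  σ_ne : ∀ w, σ w ≠ v
  π_σ : ∀ w, π (σ w) = w
  σ_π : ∀ u, u ≠ v → σ (π u) = u
  ι_injective : Function.Injective ι
  exists_ι_eq : ∀ f, f ≠ e → f ≠ e₁ → ∃ f', ι f' = f
  ι_ne_e : ∀ f', ι f' ≠ e
  ι_ne_e₁ : ∀ f', ι f' ≠ e₁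
  ι_xy : ι xy = e₂
  ends_xy : G'.ends xy = s(π x, π y)
  ends_of_ne_xy : ∀ f', f' ≠ xy → G'.ends f' = (G.ends (ι f')).map π
  notMem_ends_of_ne_xy : ∀ f', f' ≠ xy → v ∉ G.ends (ι f')
  ends_e : G.ends e = s(v, b)
  ends_e₁ : G.ends e₁ = s(v, x)
  ends_e₂ : G.ends e₂ = s(v, y)
  e_ne_e₁ : e ≠ e₁

namespace SplitOff

variable {G : Multigraph V E} {G' : Multigraph W F} {v b x y : V} {e e₁ e₂ : E}

theorem b_ne_v (D : G.SplitOff G' v b x y e e₁ e₂) : b ≠ v := (ne_of_ends_eq D.ends_e).symm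

theorem x_ne_v (D : G.SplitOff G' v b x y e e₁ e₂) : x ≠ v := (ne_of_ends_eq D.ends_e₁).symm

theorem y_ne_v (D : G.SplitOff G' v b x y e e₁ e₂) : y ≠ v := (ne_of_ends_eq D.ends_e₂).symm

theorem x_ne_y (D : G.SplitOff G' v b x y e e₁ e₂) : x ≠ y :=
  fun h => ne_of_ends_eq D.ends_xy (congrArg D.π h)

theorem e₁_ne_e₂ (D : G.SplitOff G' v b x y e e₁ e₂) : e₁ ≠ e₂ :=
  fun h => D.ι_ne_e₁ D.xy (D.ι_xy.trans h.symm)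

theorem π_inj (D : G.SplitOff G' v b x y e e₁ e₂) {u t : V} (hu : u ≠ v) (ht : t ≠ v) :
    D.π u = D.π t ↔ u = t :=
  ⟨fun h => by rw [← D.σ_π u hu, h, D.σ_π t ht], congrArg D.π⟩

theorem eq_of_ends_eq (D : G.SplitOff G' v b x y e e₁ e₂) {f : E} {t : V}
    (h : G.ends f = s(v, t)) : f = e ∧ t = b ∨ f = e₁ ∧ t = x ∨ f = e₂ ∧ t = y := by
  by_cases he : f = e
  · rw [he, D.ends_e] at h
    exact Or.inl ⟨he, (Sym2.congr_right.mp h).symm⟩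
  by_cases he₁ : f = e₁
  · rw [he₁, D.ends_e₁] at h
    exact Or.inr (Or.inl ⟨he₁, (Sym2.congr_right.mp h).symm⟩)
  obtain ⟨f', rfl⟩ := D.exists_ι_eq f he he₁
  by_cases hxy : f' = D.xy
  · rw [hxy, D.ι_xy, D.ends_e₂] at h
    exact Or.inr (Or.inr ⟨hxy ▸ D.ι_xy, (Sym2.congr_right.mp h).symm⟩)
  · exact absurd (h ▸ Sym2.mem_mk_left v t) (D.notMem_ends_of_ne_xy f' hxy)

theorem ends_ι (D : G.SplitOff G' v b x y e e₁ e₂) {f' : F} (hf' : f' ≠ D.xy) :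
    G.ends (D.ι f') = (G'.ends f').map D.σ := by
  rw [D.ends_of_ne_xy f' hf', Sym2.map_map]
  refine (congrFun Sym2.map_id _).symm.trans (Sym2.map_congr fun u hu => ?_)
  exact (D.σ_π u (ne_of_mem_of_not_mem hu (D.notMem_ends_of_ne_xy f' hf'))).symm

theorem sym2_eq_of_ends_xy (D : G.SplitOff G' v b x y e e₁ e₂) {a c : W}
    (h : G'.ends D.xy = s(a, c)) : s(x, y) = s(D.σ a, D.σ c) := by
  have := congrArg (Sym2.map D.σ) (D.ends_xy.symm.trans h)
  rwa [Sym2.map_mk, Sym2.map_mk, D.σ_π x D.x_ne_v, D.σ_π y D.y_ne_v] at this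

theorem reachable_x_y (D : G.SplitOff G' v b x y e e₁ e₂) {S : Set E} (h₁ : e₁ ∈ S)
    (h₂ : e₂ ∈ S) : G.Reachable S x y :=
  (reachable_of_ends h₁ D.ends_e₁).symm.trans (reachable_of_ends h₂ D.ends_e₂)

open Classical in
/-- The vertex map of `G` onto `G'` that contracts the edge joining `v` to `w`. -/
noncomputable def proj (D : G.SplitOff G' v b x y e e₁ e₂) (w : V) : V → W :=
  Function.update D.π v (D.π w)

theorem proj_self (D : G.SplitOff G' v b x y e e₁ e₂) (w : V) : D.proj w v = D.π w := by
  simp [proj]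

theorem proj_of_ne (D : G.SplitOff G' v b x y e e₁ e₂) (w : V) {u : V} (hu : u ≠ v) :
    D.proj w u = D.π u := by
  simp [proj, hu]

theorem proj_σ (D : G.SplitOff G' v b x y e e₁ e₂) (w : V) (a : W) : D.proj w (D.σ a) = a := by
  rw [D.proj_of_ne w (D.σ_ne a), D.π_σ]

theorem ends_eq_map_proj (D : G.SplitOff G' v b x y e e₁ e₂) (w : V) {f' : F}
    (hf' : f' ≠ D.xy) : G'.ends f' = (G.ends (D.ι f')).map (D.proj w) := by
  rw [D.ends_of_ne_xy f' hf']
  exact Sym2.map_congr fun u hu =>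
    (D.proj_of_ne w (ne_of_mem_of_not_mem hu (D.notMem_ends_of_ne_xy f' hf'))).symm

theorem reachable_proj (D : G.SplitOff G' v b x y e e₁ e₂) (w : V) {T : Set E} {T' : Set F}
    (hT : ∀ f', f' ≠ D.xy → D.ι f' ∈ T → f' ∈ T')
    (hv : ∀ f ∈ T, ∀ t, G.ends f = s(v, t) → G'.Reachable T' (D.π w) (D.π t))
    {a c : V} (h : G.Reachable T a c) : G'.Reachable T' (D.proj w a) (D.proj w c) := by
  refine h.map _ fun f hf a c hac => ?_
  by_cases hvf : v ∈ G.ends f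
  · obtain ⟨t, ht⟩ := Sym2.mem_iff_exists.mp hvf
    have hmap : (G.ends f).map (D.proj w) = s(D.π w, D.π t) := by
      rw [ht, Sym2.map_mk, D.proj_self, D.proj_of_ne w (ne_of_ends_eq ht).symm]
    rw [hac, Sym2.map_mk] at hmap
    exact (hv f hf t ht).of_sym2_eq hmap.symm
  · have hfe : f ≠ e := fun h => hvf (h ▸ D.ends_e ▸ Sym2.mem_mk_left v b)
    have hfe₁ : f ≠ e₁ := fun h => hvf (h ▸ D.ends_e₁ ▸ Sym2.mem_mk_left v x)
    obtain ⟨f', rfl⟩ := D.exists_ι_eq f hfe hfe₁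
    have hxy : f' ≠ D.xy := fun h => hvf (by rw [h, D.ι_xy, D.ends_e₂]; exact Sym2.mem_mk_left v y)
    exact reachable_of_ends (hT f' hxy hf) (by rw [D.ends_eq_map_proj w hxy, hac, Sym2.map_mk])

theorem reachable_σ (D : G.SplitOff G' v b x y e e₁ e₂) {S' : Set F} {S : Set E}
    (hS : ∀ f' ∈ S', f' ≠ D.xy → D.ι f' ∈ S) (hxy : D.xy ∈ S' → G.Reachable S x y)
    {a c : W} (h : G'.Reachable S' a c) : G.Reachable S (D.σ a) (D.σ c) := by
  refine h.map _ fun f' hf' a c hac => ?_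
  by_cases hf : f' = D.xy
  · rw [hf] at hf' hac
    exact (hxy hf').of_sym2_eq (D.sym2_eq_of_ends_xy hac)
  · exact reachable_of_ends (hS f' hf' hf) (by rw [D.ends_ι hf, hac, Sym2.map_mk])

theorem connected_preimage_of_e_notMem (D : G.SplitOff G' v b x y e e₁ e₂) {T : Set E}
    (hT : G.Connected T) (he : e ∉ T) (he₂ : e₂ ∈ T) : G'.Connected (D.ι ⁻¹' T) := by
  intro a c
  have h := D.reachable_proj x (T' := D.ι ⁻¹' T) (fun _ _ hf => hf) ?_ (hT (D.σ a) (D.σ c))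
  · rwa [D.proj_σ, D.proj_σ] at h
  · intro f hf t ht
    rcases D.eq_of_ends_eq ht with ⟨rfl, -⟩ | ⟨-, rfl⟩ | ⟨-, rfl⟩
    · exact absurd hf he
    · exact .refl
    · exact reachable_of_ends (by rwa [Set.mem_preimage, D.ι_xy]) D.ends_xy

theorem connected_preimage_of_e₁_e₂_notMem (D : G.SplitOff G' v b x y e e₁ e₂) {T : Set E}
    (hT : G.Connected T) (he₁ : e₁ ∉ T) (he₂ : e₂ ∉ T) : G'.Connected (D.ι ⁻¹' T) := by
  intro a c
  have h := D.reachable_proj b (T' := D.ι ⁻¹' T) (fun _ _ hf => hf) ?_ (hT (D.σ a) (D.σ c))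
  · rwa [D.proj_σ, D.proj_σ] at h
  · intro f hf t ht
    rcases D.eq_of_ends_eq ht with ⟨-, rfl⟩ | ⟨rfl, -⟩ | ⟨rfl, -⟩
    · exact .refl
    · exact absurd hf he₁
    · exact absurd hf he₂

theorem acyclic_preimage (D : G.SplitOff G' v b x y e e₁ e₂) {T : Set E} (hT : G.Acyclic T)
    (he : e₂ ∈ T → e₁ ∈ T) : G'.Acyclic (D.ι ⁻¹' T) := by
  intro f' hf' a c hac hreach
  have hS : ∀ g' ∈ D.ι ⁻¹' T \ {f'}, g' ≠ D.xy → D.ι g' ∈ T \ {D.ι f'} :=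
    fun g' hg' _ => ⟨hg'.1, fun h => hg'.2 (D.ι_injective h)⟩
  by_cases hxy : f' = D.xy
  · -- the path `x ⋯ y` avoiding `e₂` closes the cycle `v x ⋯ y v` through `e₂`
    rw [hxy] at hf' hac hS hreach
    rw [D.ι_xy] at hS
    have he₂ : e₂ ∈ T := D.ι_xy ▸ hf'
    have hxy' : G.Reachable (T \ {e₂}) x y :=
      (D.reachable_σ hS (fun h => absurd rfl h.2) hreach).of_sym2_eq
        (D.sym2_eq_of_ends_xy hac).symm
    exact hT e₂ he₂ v y D.ends_e₂
      ((reachable_of_ends (S := T \ {e₂}) ⟨he he₂, D.e₁_ne_e₂⟩ D.ends_e₁).trans hxy')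
  · refine hT.not_reachable_map hf' D.σ (D.ends_ι hxy) hac (D.reachable_σ hS (fun h => ?_) hreach)
    have he₂ : e₂ ∈ T := D.ι_xy ▸ h.1
    exact D.reachable_x_y ⟨he he₂, (D.ι_ne_e₁ f').symm⟩
      ⟨he₂, fun h' => h.2 (D.ι_injective (D.ι_xy.trans h'))⟩

theorem isDTD_preimage (D : G.SplitOff G' v b x y e e₁ e₂) {T₁ T₂ : Set E} (h : G.IsDTD T₁ T₂)
    (he : e ∈ T₂) (he₁ : e₁ ∈ T₁) (he₂ : e₂ ∈ T₁) : G'.IsDTD (D.ι ⁻¹' T₁) (D.ι ⁻¹' T₂) := by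
  obtain ⟨hunion, hdisj, ⟨hconn₁, hacyc₁⟩, ⟨hconn₂, hacyc₂⟩⟩ := h
  have hT₂ : ∀ {f}, f ∈ T₁ → f ∉ T₂ := fun hf => Set.disjoint_left.mp hdisj hf
  refine ⟨by rw [← Set.preimage_union, hunion, Set.preimage_univ], hdisj.preimage _,
    ⟨D.connected_preimage_of_e_notMem hconn₁ (fun h => hT₂ h he) he₂,
      D.acyclic_preimage hacyc₁ fun _ => he₁⟩,
    ⟨D.connected_preimage_of_e₁_e₂_notMem hconn₂ (hT₂ he₁) (hT₂ he₂),
      D.acyclic_preimage hacyc₂ fun h => absurd h (hT₂ he₂)⟩⟩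

theorem ι_mem_insert_iff (D : G.SplitOff G' v b x y e e₁ e₂) {f : E} (hf : f = e ∨ f = e₁)
    {S' : Set F} {f' : F} : D.ι f' ∈ insert f (D.ι '' S') ↔ f' ∈ S' := by
  rw [Set.mem_insert_iff, D.ι_injective.mem_set_image]
  rcases hf with rfl | rfl
  exacts [or_iff_right (D.ι_ne_e f'), or_iff_right (D.ι_ne_e₁ f')]

theorem mem_diff_of_ι_mem (D : G.SplitOff G' v b x y e e₁ e₂) {f : E} (hf : f = e ∨ f = e₁)
    {S' : Set F} {f' f₀ : F} (h : D.ι f' ∈ insert f (D.ι '' S') \ {D.ι f₀}) : f' ∈ S' \ {f₀} :=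
  ⟨(D.ι_mem_insert_iff hf).mp h.1, fun h' => h.2 (congrArg D.ι h')⟩

theorem e₂_mem_image_iff (D : G.SplitOff G' v b x y e e₁ e₂) {S' : Set F} :
    e₂ ∈ D.ι '' S' ↔ D.xy ∈ S' := by
  rw [← D.ι_injective.mem_set_image (s := S'), D.ι_xy]

theorem e_notMem_insert_e₁ (D : G.SplitOff G' v b x y e e₁ e₂) {S' : Set F} :
    e ∉ insert e₁ (D.ι '' S') := by
  rintro (h | ⟨f', -, hf'⟩)
  exacts [D.e_ne_e₁ h, D.ι_ne_e f' hf']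

theorem e₁_notMem_insert_e (D : G.SplitOff G' v b x y e e₁ e₂) {S' : Set F} :
    e₁ ∉ insert e (D.ι '' S') := by
  rintro (h | ⟨f', -, hf'⟩)
  exacts [D.e_ne_e₁ h.symm, D.ι_ne_e₁ f' hf']

theorem e₂_notMem_insert_e (D : G.SplitOff G' v b x y e e₁ e₂) {S' : Set F} (hxy : D.xy ∉ S') :
    e₂ ∉ insert e (D.ι '' S') := by
  rintro (h | h)
  exacts [D.ι_ne_e D.xy (D.ι_xy.trans h), hxy (D.e₂_mem_image_iff.mp h)]

theorem connected_insert_e₁ (D : G.SplitOff G' v b x y e e₁ e₂) {S' : Set F}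
    (hS : G'.Connected S') (hxy : D.xy ∈ S') : G.Connected (insert e₁ (D.ι '' S')) := by
  refine connected_of_forall_reachable x fun u => ?_
  by_cases hu : u = v
  · rw [hu]
    exact reachable_of_ends (.inl rfl) D.ends_e₁
  · have h := D.reachable_σ (S := insert e₁ (D.ι '' S')) (fun f' hf' _ => .inr ⟨f', hf', rfl⟩)
      (fun _ => D.reachable_x_y (.inl rfl) (.inr (D.e₂_mem_image_iff.mpr hxy)))
      (hS (D.π u) (D.π x))
    rwa [D.σ_π u hu, D.σ_π x D.x_ne_v] at h

theorem connected_insert_e (D : G.SplitOff G' v b x y e e₁ e₂) {S' : Set F}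
    (hS : G'.Connected S') (hxy : D.xy ∉ S') : G.Connected (insert e (D.ι '' S')) := by
  refine connected_of_forall_reachable b fun u => ?_
  by_cases hu : u = v
  · rw [hu]
    exact reachable_of_ends (.inl rfl) D.ends_e
  · have h := D.reachable_σ (S := insert e (D.ι '' S')) (fun f' hf' _ => .inr ⟨f', hf', rfl⟩)
      (fun h => absurd h hxy) (hS (D.π u) (D.π b))
    rwa [D.σ_π u hu, D.σ_π b D.b_ne_v] at h

theorem acyclic_insert_e (D : G.SplitOff G' v b x y e e₁ e₂) {S' : Set F}
    (hS : G'.Acyclic S') (hxy : D.xy ∉ S') : G.Acyclic (insert e (D.ι '' S')) := by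
  rintro f (rfl | ⟨f₀, hf₀, rfl⟩) a c hac hreach
  · refine D.b_ne_v ((hreach.of_sym2_eq (hac.symm.trans D.ends_e)).eq_of_isolated ?_).symm
    rintro g ⟨hg, hgf⟩ hvg
    obtain ⟨t, ht⟩ := Sym2.mem_iff_exists.mp hvg
    rcases D.eq_of_ends_eq ht with ⟨rfl, -⟩ | ⟨rfl, -⟩ | ⟨rfl, -⟩
    exacts [hgf rfl, D.e₁_notMem_insert_e hg, D.e₂_notMem_insert_e hxy hg]
  · have hf₀xy : f₀ ≠ D.xy := fun h => hxy (h ▸ hf₀)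
    refine hS.not_reachable_map hf₀ (D.proj b) (D.ends_eq_map_proj b hf₀xy) hac
      (D.reachable_proj b (fun _ _ hg => D.mem_diff_of_ι_mem (.inl rfl) hg)
        (fun g hg t ht => ?_) hreach)
    rcases D.eq_of_ends_eq ht with ⟨-, rfl⟩ | ⟨rfl, -⟩ | ⟨rfl, -⟩
    exacts [.refl, absurd hg.1 D.e₁_notMem_insert_e, absurd hg.1 (D.e₂_notMem_insert_e hxy)]

theorem acyclic_insert_e₁ (D : G.SplitOff G' v b x y e e₁ e₂) {S' : Set F}
    (hS : G'.Acyclic S') (hxy : D.xy ∈ S') : G.Acyclic (insert e₁ (D.ι '' S')) := by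
  rintro f (rfl | ⟨f₀, hf₀, rfl⟩) a c hac hreach
  · -- contracting `e₂` turns a cycle through `e₁` into a cycle through `xy`
    refine hS.not_reachable_map hxy (D.proj y) ?_ hac
      (D.reachable_proj y (T' := S' \ {D.xy}) (fun _ hne hg => ⟨(D.ι_mem_insert_iff (.inr rfl)).mp hg.1, hne⟩)
        (fun g hg t ht => ?_) hreach)
    · rw [D.ends_xy, D.ends_e₁, Sym2.map_mk, D.proj_self, D.proj_of_ne y D.x_ne_v, Sym2.eq_swap]
    · rcases D.eq_of_ends_eq ht with ⟨rfl, -⟩ | ⟨rfl, -⟩ | ⟨-, rfl⟩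
      exacts [absurd hg.1 D.e_notMem_insert_e₁, absurd rfl hg.2, .refl]
  by_cases hf₀xy : f₀ = D.xy
  · rw [hf₀xy, D.ι_xy] at hac hreach
    refine hS.not_reachable_map hxy (D.proj x) ?_ hac
      (D.reachable_proj x (T' := S' \ {D.xy}) (fun _ hne hg => ⟨(D.ι_mem_insert_iff (.inr rfl)).mp hg.1, hne⟩)
        (fun g hg t ht => ?_) hreach)
    · rw [D.ends_xy, D.ends_e₂, Sym2.map_mk, D.proj_self, D.proj_of_ne x D.y_ne_v]
    · rcases D.eq_of_ends_eq ht with ⟨rfl, -⟩ | ⟨-, rfl⟩ | ⟨rfl, -⟩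
      exacts [absurd hg.1 D.e_notMem_insert_e₁, .refl, absurd rfl hg.2]
  · refine hS.not_reachable_map hf₀ (D.proj x) (D.ends_eq_map_proj x hf₀xy) hac
      (D.reachable_proj x (fun _ _ hg => D.mem_diff_of_ι_mem (.inr rfl) hg)
        (fun g hg t ht => ?_) hreach)
    rcases D.eq_of_ends_eq ht with ⟨rfl, -⟩ | ⟨-, rfl⟩ | ⟨-, rfl⟩
    exacts [absurd hg.1 D.e_notMem_insert_e₁, .refl,
      reachable_of_ends ⟨hxy, Ne.symm hf₀xy⟩ D.ends_xy]

theorem isDTD_insert (D : G.SplitOff G' v b x y e e₁ e₂) {S₁ S₂ : Set F} (h : G'.IsDTD S₁ S₂)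
    (hxy : D.xy ∈ S₁) : G.IsDTD (insert e₁ (D.ι '' S₁)) (insert e (D.ι '' S₂)) := by
  obtain ⟨hunion, hdisj, ⟨hconn₁, hacyc₁⟩, ⟨hconn₂, hacyc₂⟩⟩ := h
  have hxy₂ : D.xy ∉ S₂ := Set.disjoint_left.mp hdisj hxy
  refine ⟨Set.eq_univ_of_forall fun f => ?_, Set.disjoint_left.mpr ?_,
    ⟨D.connected_insert_e₁ hconn₁ hxy, D.acyclic_insert_e₁ hacyc₁ hxy⟩,
    ⟨D.connected_insert_e hconn₂ hxy₂, D.acyclic_insert_e hacyc₂ hxy₂⟩⟩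
  · by_cases he : f = e
    · exact .inr (.inl he)
    by_cases he₁ : f = e₁
    · exact .inl (.inl he₁)
    obtain ⟨f', rfl⟩ := D.exists_ι_eq f he he₁
    rcases hunion ▸ Set.mem_univ f' with hf' | hf'
    exacts [.inl (.inr ⟨f', hf', rfl⟩), .inr (.inr ⟨f', hf', rfl⟩)]
  · rintro f (rfl | ⟨f₁, hf₁, rfl⟩) hf₂
    · exact D.e₁_notMem_insert_e hf₂
    · exact Set.disjoint_left.mp hdisj hf₁ ((D.ι_mem_insert_iff (.inl rfl)).mp hf₂)

theorem mem_ends_ι_iff (D : G.SplitOff G' v b x y e e₁ e₂) {f' : F} (hf' : f' ≠ D.xy) {u : V}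
    (hu : u ≠ v) : u ∈ G.ends (D.ι f') ↔ D.π u ∈ G'.ends f' := by
  rw [D.ends_of_ne_xy f' hf', Sym2.mem_map]
  refine ⟨fun h => ⟨u, h, rfl⟩, fun ⟨t, ht, htu⟩ => ?_⟩
  rwa [← (D.π_inj (ne_of_mem_of_not_mem ht (D.notMem_ends_of_ne_xy f' hf')) hu).mp htu]

theorem deg_image (D : G.SplitOff G' v b x y e e₁ e₂) {S' : Set F} (hxy : D.xy ∉ S') {u : V}
    (hu : u ≠ v) : G.deg (D.ι '' S') u = G'.deg S' (D.π u) := by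
  have : G.incEdges (D.ι '' S') u = D.ι '' G'.incEdges S' (D.π u) := by
    ext f
    constructor
    · rintro ⟨⟨f', hf', rfl⟩, hu'⟩
      exact ⟨f', ⟨hf', (D.mem_ends_ι_iff (ne_of_mem_of_not_mem hf' hxy) hu).mp hu'⟩, rfl⟩
    · rintro ⟨f', ⟨hf', hu'⟩, rfl⟩
      exact ⟨⟨f', hf', rfl⟩, (D.mem_ends_ι_iff (ne_of_mem_of_not_mem hf' hxy) hu).mpr hu'⟩
  rw [deg, this, Set.ncard_image_of_injective _ D.ι_injective]
  rfl

theorem deg_insert_e (D : G.SplitOff G' v b x y e e₁ e₂) {S' : Set F} (hxy : D.xy ∉ S')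
    {u : V} (hu : u ≠ v) (hub : u ≠ b) : G.deg (insert e (D.ι '' S')) u = G'.deg S' (D.π u) := by
  rw [deg_insert_of_notMem (by simp [D.ends_e, Sym2.mem_iff, hu, hub]), D.deg_image hxy hu]

theorem deg_insert_e₁ [Finite E] [Finite F] (D : G.SplitOff G' v b x y e e₁ e₂) {S' : Set F}
    (hxy : D.xy ∈ S') {u : V} (hu : u ≠ v) :
    G.deg (insert e₁ (D.ι '' S')) u = G'.deg S' (D.π u) := by
  have hxy' : D.xy ∉ S' \ {D.xy} := fun h => h.2 rfl
  have he₁ : e₁ ∉ insert e₂ (D.ι '' (S' \ {D.xy})) := by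
    rintro (h | ⟨f', -, hf'⟩)
    exacts [D.e₁_ne_e₂ h, D.ι_ne_e₁ f' hf']
  have he₂ : e₂ ∉ D.ι '' (S' \ {D.xy}) := fun h => hxy' (D.e₂_mem_image_iff.mp h)
  rw [← Set.insert_sdiff_self_of_mem hxy, Set.image_insert_eq, D.ι_xy]
  by_cases hux : u = x
  · rw [deg_insert_of_mem he₁ (by simp [D.ends_e₁, hux]),
      deg_insert_of_notMem (by simp [D.ends_e₂, Sym2.mem_iff, hux, D.x_ne_v, D.x_ne_y]),
      deg_insert_of_mem hxy' (by simp [D.ends_xy, hux]), D.deg_image hxy' hu]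
  by_cases huy : u = y
  · rw [deg_insert_of_notMem (by simp [D.ends_e₁, Sym2.mem_iff, hu, hux]),
      deg_insert_of_mem he₂ (by simp [D.ends_e₂, huy]),
      deg_insert_of_mem hxy' (by simp [D.ends_xy, huy]), D.deg_image hxy' hu]
  · rw [deg_insert_of_notMem (by simp [D.ends_e₁, Sym2.mem_iff, hu, hux]),
      deg_insert_of_notMem (by simp [D.ends_e₂, Sym2.mem_iff, hu, huy]),
      deg_insert_of_notMem (by simp [D.ends_xy, Sym2.mem_iff, D.π_inj hu D.x_ne_v,
        D.π_inj hu D.y_ne_v, hux, huy]), D.deg_image hxy' hu]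

theorem balanced_insert [Finite E] [Finite F] (D : G.SplitOff G' v b x y e e₁ e₂) {c : ℕ}
    {S₁ S₂ : Set F} (h : G'.IsDTD S₁ S₂) (hxy : D.xy ∈ S₁) (hbal : G'.Balanced c S₁ S₂)
    (hv : G.Small c v) (hb : G.Small c b) :
    G.Balanced c (insert e₁ (D.ι '' S₁)) (insert e (D.ι '' S₂)) := by
  intro u
  by_cases huv : u = v
  · rw [huv]
    exact (D.isDTD_insert h hxy).abs_deg_sub_le_of_small hv D.b_ne_v
  by_cases hub : u = b
  · rw [hub]
    exact (D.isDTD_insert h hxy).abs_deg_sub_le_of_small hb D.b_ne_v.symm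
  rw [D.deg_insert_e₁ hxy huv, D.deg_insert_e (Set.disjoint_left.mp h.2.1 hxy) huv hub]
  exact hbal (D.π u)

end SplitOff

theorem exists_splitOff (G : Multigraph V E) {v b x y : V} {e e₁ e₂ : E}
    (eV : {u // u ≠ v} ≃ W) (eE : {f // f ≠ e ∧ f ≠ e₁} ≃ F)
    (ends_e : G.ends e = s(v, b)) (ends_e₁ : G.ends e₁ = s(v, x)) (ends_e₂ : G.ends e₂ = s(v, y))
    (hxy : x ≠ y) (he₁ : e ≠ e₁) (he₂ : e ≠ e₂) (h₁₂ : e₁ ≠ e₂)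
    (hinc : ∀ f, v ∈ G.ends f → f = e ∨ f = e₁ ∨ f = e₂) :
    ∃ G' : Multigraph W F, Nonempty (G.SplitOff G' v b x y e e₁ e₂) := by
  classical
  have hxv : x ≠ v := (ne_of_ends_eq ends_e₁).symm
  have hyv : y ≠ v := (ne_of_ends_eq ends_e₂).symm
  let π : V → W := fun u => if h : u = v then eV ⟨x, hxv⟩ else eV ⟨u, h⟩
  let σ : W → V := fun w => (eV.symm w).1
  let ι : F → E := fun f' => (eE.symm f').1
  let xy : F := eE ⟨e₂, he₂.symm, h₁₂.symm⟩
  have σ_π : ∀ u, u ≠ v → σ (π u) = u := fun u hu => by simp [σ, π, hu]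
  have π_inj : ∀ u t, u ≠ v → t ≠ v → π u = π t → u = t :=
    fun u t hu ht h => by rw [← σ_π u hu, h, σ_π t ht]
  have ι_injective : Function.Injective ι := fun f g h => eE.symm.injective (Subtype.ext h)
  have ι_xy : ι xy = e₂ := by simp [ι, xy]
  have notMem : ∀ f', f' ≠ xy → v ∉ G.ends (ι f') := by
    intro f' hf' hv
    rcases hinc _ hv with h | h | h
    exacts [(eE.symm f').2.1 h, (eE.symm f').2.2 h, hf' (ι_injective (h.trans ι_xy.symm))]
  let ends' : F → Sym2 W := fun f' => if f' = xy then s(π x, π y) else (G.ends (ι f')).map π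
  have loopless' : ∀ f', ¬ (ends' f').IsDiag := by
    intro f'
    by_cases hf' : f' = xy
    · simp only [ends', if_pos hf', Sym2.mk_isDiag_iff]
      exact fun h => hxy (π_inj x y hxv hyv h)
    · obtain ⟨p, q, hpq⟩ := G.exists_ends_eq (ι f')
      have hp : p ≠ v := fun h => notMem f' hf' (by rw [hpq, h]; exact Sym2.mem_mk_left _ _)
      have hq : q ≠ v := fun h => notMem f' hf' (by rw [hpq, h]; exact Sym2.mem_mk_right _ _)
      simp only [ends', if_neg hf', hpq, Sym2.map_mk, Sym2.mk_isDiag_iff]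
      exact fun h => ne_of_ends_eq hpq (π_inj p q hp hq h)
  exact ⟨⟨ends', loopless'⟩, ⟨{
    π, σ, ι, xy, ι_injective, ι_xy, ends_e, ends_e₁, ends_e₂
    σ_ne := fun w => (eV.symm w).2
    π_σ := fun w => by simp [σ, π, (eV.symm w).2]
    σ_π
    exists_ι_eq := fun f h h' => ⟨eE ⟨f, h, h'⟩, by simp [ι]⟩
    ι_ne_e := fun f' => (eE.symm f').2.1
    ι_ne_e₁ := fun f' => (eE.symm f').2.2
    ends_xy := if_pos rfl
    ends_of_ne_xy := fun _ hf' => if_neg hf'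
    notMem_ends_of_ne_xy := notMem
    e_ne_e₁ := he₁ }⟩⟩

end Multigraph

theorem three_vertex_leaf_neighbour_big_general (c : ℕ) (hc : 2 ≤ c) (n m : ℕ)
    (G : Multigraph (Fin n) (Fin m))
    (hbal : G.NoBalancedDTD c)
    (hmin : ∀ (n' m' : ℕ) (G' : Multigraph (Fin n') (Fin m')),
      G'.IsDoubleTree → G'.NoBalancedDTD c → n ≤ n')
    (v b : Fin n) (hv : G.deg Set.univ v = 3)
    (T1 T2 : Set (Fin m)) (hDTD : G.IsDTD T1 T2)
    (hleaf : G.deg T2 v = 1)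
    (e : Fin m) (he : e ∈ T2) (hends : G.ends e = s(v, b)) :
    G.Big c b := by
  by_contra hb
  obtain ⟨e₁, e₂, x, y, he₁, he₂, h₁₂, hxy, hends₁, hends₂, hinc⟩ :=
    hDTD.exists_of_leaf hv hleaf he (hends ▸ Sym2.mem_mk_left v b)
  have hne : ∀ {f}, f ∈ T1 → e ≠ f := fun hf h => Set.disjoint_left.mp hDTD.2.1 (h ▸ hf) he
  have hcard : Fintype.card {u // u ≠ v} = n - 1 := by simp
  obtain ⟨G', ⟨D⟩⟩ := G.exists_splitOff (Fintype.equivFinOfCardEq hcard) (Fintype.equivFin _)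
    hends hends₁ hends₂ hxy (hne he₁) (hne he₂) h₁₂ hinc
  have hG' : ¬ G'.NoBalancedDTD c := fun h => by
    have := hmin _ _ G' ⟨_, _, D.isDTD_preimage hDTD he he₁ he₂⟩ h
    have := v.pos
    omega
  obtain ⟨S₁, S₂, hS, hSbal, hxyS⟩ := Multigraph.exists_isDTD_balanced_mem_left hG' D.xy
  exact hbal ⟨_, _, D.isDTD_insert hS hxyS,
    D.balanced_insert hS hxyS hSbal (by unfold Multigraph.Small; omega) (not_lt.mp hb)⟩

/-- **Theorem (Statement 9).** In a vertex-minimal double tree `G` with no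
`c`-balanced double tree decomposition (`c ≥ 2`): if `v` is a 3-vertex which
is a leaf of the tree `T2` of a double tree decomposition `T1 ⊔ T2`, with
unique incident edge `vb ∈ T2`, then `b` is big. -/
theorem three_vertex_leaf_neighbour_big (c : ℕ) (hc : 2 ≤ c) (n m : ℕ)
    (G : Multigraph (Fin n) (Fin m))
    (hG : G.IsDoubleTree) (hbal : G.NoBalancedDTD c)
    (hmin : ∀ (n' m' : ℕ) (G' : Multigraph (Fin n') (Fin m')),
      G'.IsDoubleTree → G'.NoBalancedDTD c → n ≤ n')
    (v b : Fin n) (hv : G.deg Set.univ v = 3)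
    (T1 T2 : Set (Fin m)) (hDTD : G.IsDTD T1 T2)
    (hleaf : G.deg T2 v = 1)
    (e : Fin m) (he : e ∈ T2) (hends : G.ends e = s(v, b)) :
    G.Big c b :=
  three_vertex_leaf_neighbour_big_general c hc n m G hbal hmin v b hv T1 T2 hDTD hleaf e he hends
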